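/- arXiv:1703.10084 — 2 statements merged into one kernel-verified Lean document; each statement's English description precedes it below -/
import Mathlib

section
/- Let A > 0, J > 0, N be a positive integer, and let X be a finite set of nonnegative reals. Let g0, g1 : X → ℝ be nonnegative weight functions with positive total mass satisfying the monotone likelihood ratio condition g1(x) * g0(x') ≥ g0(x) * g1(x') for all x, x' ∈ X with x' < x. Then the function L : ℝ → ℝ defined by L(σ) = (∑_{x∈X} g1(x) · exp(−N(xA+J)) · (xA+J)^σ) / (∑_{x∈X} g0(x) · exp(−N(xA+J)) · (xA+J)^σ) is monotonically nondecreasing in σ ≥ 0. -/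
open Real Finset

/-! The weight at `σ₂` is the weight at `σ₁` times `u x = (x A + J) ^ (σ₂ - σ₁)`, which is
nondecreasing in `x`. Tilting `g1, g0` by a common positive factor keeps their likelihood ratio
monotone, and under a monotone likelihood ratio the `g1`-weighted mean of a nondecreasing `u`
dominates the `g0`-weighted one: `2 ((∑ p u) (∑ q) - (∑ p) (∑ q u))` is the double sum of the
nonnegative terms `(p i q j - p j q i) (u i - u j)`. -/

theorem Finset.sum_mul_sum_le_of_pairwise {ι : Type*} (s : Finset ι) (p q u : ι → ℝ)
    (h : ∀ i ∈ s, ∀ j ∈ s, 0 ≤ (p i * q j - p j * q i) * (u i - u j)) :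
    (∑ i ∈ s, p i) * ∑ i ∈ s, q i * u i ≤ (∑ i ∈ s, p i * u i) * ∑ i ∈ s, q i := by
  have hgap : (∑ i ∈ s, p i * u i) * ∑ i ∈ s, q i - (∑ i ∈ s, p i) * ∑ i ∈ s, q i * u i
      = ∑ i ∈ s, ∑ j ∈ s, (p i * u i * q j - p i * (q j * u j)) := by
    simp only [sum_sub_distrib, sum_mul_sum]
  have hswap : ∑ i ∈ s, ∑ j ∈ s, (p j * u j * q i - p j * (q i * u i))
      = ∑ i ∈ s, ∑ j ∈ s, (p i * u i * q j - p i * (q j * u j)) := sum_comm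
  have hsymm : ∑ i ∈ s, ∑ j ∈ s, (p i * q j - p j * q i) * (u i - u j)
      = ∑ i ∈ s, ∑ j ∈ s, (p i * u i * q j - p i * (q j * u j))
        + ∑ i ∈ s, ∑ j ∈ s, (p j * u j * q i - p j * (q i * u i)) := by
    rw [← sum_add_distrib]
    refine sum_congr rfl fun i _ => ?_
    rw [← sum_add_distrib]
    exact sum_congr rfl fun j _ => by ring
  have := sum_nonneg fun i hi => sum_nonneg fun j hj => h i hi j hj
  linarith

section MonotoneLikelihoodRatio

variable {ι : Type*} [LinearOrder ι]

/-- `p / q` is nondecreasing on `s`, cross-multiplied so that zeros of `q` are allowed. -/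
def MonotoneLikelihoodRatioOn (p q : ι → ℝ) (s : Finset ι) : Prop :=
  ∀ i ∈ s, ∀ j ∈ s, j < i → q i * p j ≤ p i * q j

theorem MonotoneLikelihoodRatioOn.mul_right {p q c : ι → ℝ} {s : Finset ι}
    (h : MonotoneLikelihoodRatioOn p q s) (hc : ∀ i ∈ s, 0 ≤ c i) :
    MonotoneLikelihoodRatioOn (fun i => p i * c i) (fun i => q i * c i) s := by
  intro i hi j hj hji
  calc q i * c i * (p j * c j) = q i * p j * (c i * c j) := by ring
    _ ≤ p i * q j * (c i * c j) :=
      mul_le_mul_of_nonneg_right (h i hi j hj hji) (mul_nonneg (hc i hi) (hc j hj))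
    _ = p i * c i * (q j * c j) := by ring

theorem MonotoneLikelihoodRatioOn.sum_mul_sum_le {p q u : ι → ℝ} {s : Finset ι}
    (h : MonotoneLikelihoodRatioOn p q s) (hu : MonotoneOn u s) :
    (∑ i ∈ s, p i) * ∑ i ∈ s, q i * u i ≤ (∑ i ∈ s, p i * u i) * ∑ i ∈ s, q i := by
  refine s.sum_mul_sum_le_of_pairwise p q u fun i hi j hj => ?_
  rcases lt_trichotomy j i with hji | rfl | hij
  · exact mul_nonneg (by linarith [h i hi j hj hji]) (sub_nonneg.2 (hu hj hi hji.le))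
  · simp
  · exact mul_nonneg_of_nonpos_of_nonpos (by linarith [h j hj i hi hij])
      (sub_nonpos.2 (hu hi hj hij.le))

end MonotoneLikelihoodRatio

theorem Finset.sum_mul_pos_of_sum_pos {ι : Type*} {s : Finset ι} {g c : ι → ℝ}
    (hg : ∀ i ∈ s, 0 ≤ g i) (hgs : 0 < ∑ i ∈ s, g i) (hc : ∀ i ∈ s, 0 < c i) :
    0 < ∑ i ∈ s, g i * c i := by
  obtain ⟨i, hi, hgi⟩ := exists_lt_of_sum_lt (sum_const_zero.trans_lt hgs)
  exact sum_pos' (fun j hj => mul_nonneg (hg j hj) (hc j hj).le) ⟨i, hi, mul_pos hgi (hc i hi)⟩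

theorem llr_monotone_general
    (A J : ℝ) (hA : 0 < A) (hJ : 0 < J) (N : ℕ)
    (X : Finset ℝ) (hXnn : ∀ x ∈ X, 0 ≤ x)
    (g0 g1 : ℝ → ℝ)
    (hg0 : ∀ x ∈ X, 0 ≤ g0 x)
    (hg0pos : 0 < ∑ x ∈ X, g0 x)
    (hMLR : ∀ x ∈ X, ∀ x' ∈ X, x' < x → g0 x * g1 x' ≤ g1 x * g0 x')
    (L : ℝ → ℝ)
    (hL : ∀ σ : ℝ, L σ =
      (∑ x ∈ X, g1 x * Real.exp (-(N : ℝ) * (x * A + J)) * (x * A + J) ^ σ) /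
      (∑ x ∈ X, g0 x * Real.exp (-(N : ℝ) * (x * A + J)) * (x * A + J) ^ σ)) :
    ∀ σ₁ σ₂ : ℝ, 0 ≤ σ₁ → σ₁ ≤ σ₂ → L σ₁ ≤ L σ₂ := by
  intro σ₁ σ₂ _ h12
  have hφ : ∀ x ∈ X, 0 < x * A + J := fun x hx =>
    add_pos_of_nonneg_of_pos (mul_nonneg (hXnn x hx) hA.le) hJ
  have hden : ∀ σ : ℝ,
      0 < ∑ x ∈ X, g0 x * Real.exp (-(N : ℝ) * (x * A + J)) * (x * A + J) ^ σ := fun σ => by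
    simp only [mul_assoc]
    exact sum_mul_pos_of_sum_pos hg0 hg0pos fun x hx =>
      mul_pos (exp_pos _) (rpow_pos_of_pos (hφ x hx) σ)
  have htilt : ∀ g : ℝ → ℝ, ∀ x ∈ X, g x * Real.exp (-(N : ℝ) * (x * A + J)) * (x * A + J) ^ σ₂
      = g x * Real.exp (-(N : ℝ) * (x * A + J)) * (x * A + J) ^ σ₁ * (x * A + J) ^ (σ₂ - σ₁) :=
    fun g x hx => by rw [mul_assoc _ (_ ^ σ₁), ← rpow_add (hφ x hx), add_sub_cancel]
  have hmlr : MonotoneLikelihoodRatioOn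
      (fun x => g1 x * Real.exp (-(N : ℝ) * (x * A + J)) * (x * A + J) ^ σ₁)
      (fun x => g0 x * Real.exp (-(N : ℝ) * (x * A + J)) * (x * A + J) ^ σ₁) X := by
    simp only [mul_assoc]
    exact MonotoneLikelihoodRatioOn.mul_right hMLR fun x hx =>
      (mul_pos (exp_pos _) (rpow_pos_of_pos (hφ x hx) σ₁)).le
  have hmono : MonotoneOn (fun x => (x * A + J) ^ (σ₂ - σ₁)) X := fun x hx y _ hxy =>
    rpow_le_rpow (hφ x hx).le (by nlinarith) (sub_nonneg.2 h12)
  rw [hL, hL, div_le_div_iff₀ (hden σ₁) (hden σ₂), sum_congr rfl (htilt g1),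
    sum_congr rfl (htilt g0)]
  exact hmlr.sum_mul_sum_le hmono

/-- Theorem 1 (likelihood-ratio form): under the MLR condition on the sensing
weights `g0, g1`, the likelihood ratio `L` is nondecreasing in `σ ≥ 0`. -/
theorem llr_monotone
    (A J : ℝ) (hA : 0 < A) (hJ : 0 < J) (N : ℕ) (hN : 0 < N)
    (X : Finset ℝ) (hXnn : ∀ x ∈ X, 0 ≤ x)
    (g0 g1 : ℝ → ℝ)
    (hg0 : ∀ x ∈ X, 0 ≤ g0 x) (hg1 : ∀ x ∈ X, 0 ≤ g1 x)
    (hg0pos : 0 < ∑ x ∈ X, g0 x) (hg1pos : 0 < ∑ x ∈ X, g1 x)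
    (hMLR : ∀ x ∈ X, ∀ x' ∈ X, x' < x → g0 x * g1 x' ≤ g1 x * g0 x')
    (L : ℝ → ℝ)
    (hL : ∀ σ : ℝ, L σ =
      (∑ x ∈ X, g1 x * Real.exp (-(N : ℝ) * (x * A + J)) * (x * A + J) ^ σ) /
      (∑ x ∈ X, g0 x * Real.exp (-(N : ℝ) * (x * A + J)) * (x * A + J) ^ σ)) :
    ∀ σ₁ σ₂ : ℝ, 0 ≤ σ₁ → σ₁ ≤ σ₂ → L σ₁ ≤ L σ₂ :=
  llr_monotone_general A J hA hJ N X hXnn g0 g1 hg0 hg0pos hMLR L hL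
end

section
/- Let A > 0, J > 0, N a positive integer, and p0, p1 ∈ [0,1] with p0 + p1 ≤ 1. Define for σ ≥ 0: L(σ) = ((1−p1)·exp(−N(A+J))·(A+J)^σ + p1·exp(−NJ)·J^σ) / (p0·exp(−N(A+J))·(A+J)^σ + (1−p0)·exp(−NJ)·J^σ). Then L is monotonically nondecreasing on [0, ∞). -/
open Real

/-- Hard-decision special case (L = 2) of the LLR monotonicity theorem. -/
theorem llr_monotone_hard
    (A J : ℝ) (hA : 0 < A) (hJ : 0 < J) (N : ℕ) (hN : 0 < N)
    (p0 p1 : ℝ) (hp0 : p0 ∈ Set.Icc (0 : ℝ) 1) (hp1 : p1 ∈ Set.Icc (0 : ℝ) 1)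
    (hsum : p0 + p1 ≤ 1)
    (L : ℝ → ℝ)
    (hL : ∀ σ : ℝ, L σ =
      ((1 - p1) * Real.exp (-(N : ℝ) * (A + J)) * (A + J) ^ σ
        + p1 * Real.exp (-(N : ℝ) * J) * J ^ σ) /
      (p0 * Real.exp (-(N : ℝ) * (A + J)) * (A + J) ^ σ
        + (1 - p0) * Real.exp (-(N : ℝ) * J) * J ^ σ)) :
    MonotoneOn L (Set.Ici (0 : ℝ)) := by
  obtain ⟨hp00, hp01⟩ := hp0
  obtain ⟨hp10, hp11⟩ := hp1
  have hAJ : 0 < A + J := by linarith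
  intro σ1 _ σ2 _ h12
  rw [hL, hL]
  set e1 : ℝ := Real.exp (-(N : ℝ) * (A + J)) with he1
  set e2 : ℝ := Real.exp (-(N : ℝ) * J) with he2
  have he1p : 0 < e1 := Real.exp_pos _
  have he2p : 0 < e2 := Real.exp_pos _
  have hE1 : 0 < e1 * (A + J) ^ σ1 := mul_pos he1p (Real.rpow_pos_of_pos hAJ _)
  have hE2 : 0 < e1 * (A + J) ^ σ2 := mul_pos he1p (Real.rpow_pos_of_pos hAJ _)
  have hF1 : 0 < e2 * J ^ σ1 := mul_pos he2p (Real.rpow_pos_of_pos hJ _)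
  have hF2 : 0 < e2 * J ^ σ2 := mul_pos he2p (Real.rpow_pos_of_pos hJ _)
  have hD1 : 0 < p0 * (e1 * (A + J) ^ σ1) + (1 - p0) * (e2 * J ^ σ1) := by
    rcases lt_or_ge p0 1 with h | h
    · have := mul_pos (by linarith : (0:ℝ) < 1 - p0) hF1
      nlinarith [mul_nonneg hp00 hE1.le]
    · have hp0e : p0 = 1 := le_antisymm hp01 h
      rw [hp0e]; simpa using hE1
  have hD2 : 0 < p0 * (e1 * (A + J) ^ σ2) + (1 - p0) * (e2 * J ^ σ2) := by
    rcases lt_or_ge p0 1 with h | h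
    · have := mul_pos (by linarith : (0:ℝ) < 1 - p0) hF2
      nlinarith [mul_nonneg hp00 hE2.le]
    · have hp0e : p0 = 1 := le_antisymm hp01 h
      rw [hp0e]; simpa using hE2
  have hD1' : 0 < p0 * e1 * (A + J) ^ σ1 + (1 - p0) * (e2 * J ^ σ1) := by
    rw [mul_assoc]; exact hD1
  have hkey : (A + J) ^ σ1 * J ^ σ2 ≤ (A + J) ^ σ2 * J ^ σ1 := by
    have hbase : (1 : ℝ) ≤ (A + J) / J := by
      rw [le_div_iff₀ hJ]; linarith
    have := Real.rpow_le_rpow_of_exponent_le hbase h12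
    rw [Real.div_rpow hAJ.le hJ.le, Real.div_rpow hAJ.le hJ.le,
      div_le_div_iff₀ (Real.rpow_pos_of_pos hJ _) (Real.rpow_pos_of_pos hJ _)] at this
    linarith
  rw [div_le_div_iff₀ (by rw [mul_assoc, mul_assoc]; exact hD1)
      (by rw [mul_assoc, mul_assoc]; exact hD2)]
  nlinarith [mul_nonneg (by linarith : (0:ℝ) ≤ 1 - p0 - p1)
      (mul_nonneg (mul_nonneg he1p.le he2p.le)
        (by linarith : (0:ℝ) ≤ (A + J) ^ σ2 * J ^ σ1 - (A + J) ^ σ1 * J ^ σ2))]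
end
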